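/- Let E and H be real Hilbert spaces, Λ ⊆ H a nonempty compact convex set, and F : E × H → ℝ a differentiable function whose gradient is L-Lipschitz (L > 0). Assume that for each w ∈ E the map λ ↦ F(w, λ) is μ-strongly concave on Λ (μ > 0), let λ*(w) denote the unique maximizer of F(w, ·) over Λ, set Φ(w) := max_{λ ∈ Λ} F(w, λ) and κ := L/μ. Then Φ is differentiable with ∇Φ(w) = ∇_w F(w, λ*(w)) for every w ∈ E, and the map w ↦ ∇Φ(w) is (L + κL)-Lipschitz; that is, Φ is α-smooth with α = L + κL. -/

import Mathlib

/-!
Strong concavity gives quadratic growth around the maximizer,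
`F (w, l) + μ/2 ‖l - λ*(w)‖² ≤ F (w, λ*(w))`. Adding this at `(w₁, λ*(w₂))` and `(w₂, λ*(w₁))`
and bounding the mixed difference of `F` by `L ‖w₁ - w₂‖ ‖λ*(w₁) - λ*(w₂)‖` (mean value theorem
in `λ`) shows that `λ*` is `κ`-Lipschitz. `Φ w' - Φ w` lies between the increments of
`F (·, λ*(w))` and `F (·, λ*(w'))` from `w` to `w'`; the second-order Taylor bound for functions
with `L`-Lipschitz gradient and the Lipschitz continuity of `λ*` then give
`|Φ w' - Φ w - ⟪∇_w F (w, λ*(w)), w' - w⟫| ≤ (L + κL) ‖w' - w‖²`, hence the gradient.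
-/

/-- The pair `(w, l)` viewed as an element of the product Hilbert space
`E × H` equipped with the `ℓ²` (Euclidean) product norm
`‖(w, λ)‖ = √(‖w‖² + ‖λ‖²)`. -/
noncomputable def pairL2 {E H : Type*} (w : E) (l : H) : WithLp 2 (E × H) :=
  (WithLp.equiv 2 (E × H)).symm (w, l)

open Filter Topology Set InnerProductSpace

section Gradient

variable {G : Type*} [NormedAddCommGroup G] [InnerProductSpace ℝ G] [CompleteSpace G]

theorem HasGradientAt.sub {f g : G → ℝ} {f' g' x : G} (hf : HasGradientAt f f' x)
    (hg : HasGradientAt g g' x) : HasGradientAt (fun y => f y - g y) (f' - g') x := by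
  rw [hasGradientAt_iff_hasFDerivAt, map_sub]
  exact hf.hasFDerivAt.sub hg.hasFDerivAt

theorem hasGradientAt_inner_const_left (v x : G) : HasGradientAt (fun y => ⟪v, y⟫_ℝ) v x := by
  rw [hasGradientAt_iff_hasFDerivAt]
  exact (toDual ℝ G v).hasFDerivAt

theorem Convex.abs_sub_le_of_norm_gradient_le {f : G → ℝ} {f' : G → G} {s : Set G} {C : ℝ}
    (hs : Convex ℝ s) (hf : ∀ x ∈ s, HasGradientAt f (f' x) x) (hC : ∀ x ∈ s, ‖f' x‖ ≤ C)
    {x y : G} (hx : x ∈ s) (hy : y ∈ s) : |f y - f x| ≤ C * ‖y - x‖ := by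
  refine hs.norm_image_sub_le_of_norm_hasFDerivWithin_le
    (fun z hz => (hf z hz).hasFDerivAt.hasFDerivWithinAt) (fun z hz => ?_) hx hy
  rw [LinearIsometryEquiv.norm_map]
  exact hC z hz

theorem abs_sub_sub_inner_gradient_le {f : G → ℝ} {L : ℝ} (hL : 0 ≤ L) (hf : Differentiable ℝ f)
    (hlip : ∀ x y, ‖gradient f x - gradient f y‖ ≤ L * ‖x - y‖) (x y : G) :
    |f y - f x - ⟪gradient f x, y - x⟫_ℝ| ≤ L * ‖y - x‖ ^ 2 := by
  have hgrad : ∀ z ∈ Metric.closedBall x ‖y - x‖,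
      HasGradientAt (fun z => f z - ⟪gradient f x, z⟫_ℝ) (gradient f z - gradient f x) z :=
    fun z _ => (hf z).hasGradientAt.sub (hasGradientAt_inner_const_left _ z)
  have hbound : ∀ z ∈ Metric.closedBall x ‖y - x‖,
      ‖gradient f z - gradient f x‖ ≤ L * ‖y - x‖ := fun z hz =>
    (hlip z x).trans (mul_le_mul_of_nonneg_left (mem_closedBall_iff_norm.1 hz) hL)
  have := (convex_closedBall x ‖y - x‖).abs_sub_le_of_norm_gradient_le hgrad hbound
    (Metric.mem_closedBall_self (norm_nonneg _)) (mem_closedBall_iff_norm.2 le_rfl)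
  rw [inner_sub_right, sq, ← mul_assoc]
  convert this using 2
  ring

theorem hasGradientAt_of_abs_sub_sub_inner_le_sq {f : G → ℝ} {g x : G} {C : ℝ}
    (h : ∀ y, |f y - f x - ⟪g, y - x⟫_ℝ| ≤ C * ‖y - x‖ ^ 2) : HasGradientAt f g x := by
  rw [hasGradientAt_iff_isLittleO]
  have hO : (fun y => f y - f x - ⟪g, y - x⟫_ℝ) =O[𝓝 x] fun y => ‖y - x‖ ^ 2 :=
    Asymptotics.IsBigO.of_bound C (Eventually.of_forall fun y => by simpa using h y)
  exact hO.trans_isLittleO ((Asymptotics.isLittleO_norm_pow_id one_lt_two).comp_tendsto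
    (tendsto_sub_nhds_zero_iff.2 tendsto_id))

end Gradient

theorem StrongConcaveOn.add_sq_le_of_isMaxOn {G : Type*} [NormedAddCommGroup G] [NormedSpace ℝ G]
    {f : G → ℝ} {s : Set G} {m : ℝ} {x₀ y : G} (hf : StrongConcaveOn s m f) (hx₀ : x₀ ∈ s)
    (hmax : IsMaxOn f s x₀) (hy : y ∈ s) : f y + m / 2 * ‖y - x₀‖ ^ 2 ≤ f x₀ := by
  have key : ∀ a ∈ Ioc (0 : ℝ) 1, f y + m / 2 * (1 - a) * ‖y - x₀‖ ^ 2 ≤ f x₀ := by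
    rintro a ⟨ha₀, ha₁⟩
    have hconc := hf.2 hy hx₀ ha₀.le (sub_nonneg.2 ha₁) (add_sub_cancel a 1)
    have hle : f (a • y + (1 - a) • x₀) ≤ f x₀ :=
      hmax (hf.1 hy hx₀ ha₀.le (sub_nonneg.2 ha₁) (add_sub_cancel a 1))
    simp only [smul_eq_mul] at hconc
    have : a * (f y + m / 2 * (1 - a) * ‖y - x₀‖ ^ 2 - f x₀) ≤ 0 := by linarith
    linarith [nonpos_of_mul_nonpos_right this ha₀]
  have hlim : Tendsto (fun a => f y + m / 2 * (1 - a) * ‖y - x₀‖ ^ 2) (𝓝[>] 0)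
      (𝓝 (f y + m / 2 * ‖y - x₀‖ ^ 2)) :=
    ((by fun_prop : Continuous fun a : ℝ => f y + m / 2 * (1 - a) * ‖y - x₀‖ ^ 2).tendsto' 0 _
      (by simp)).mono_left nhdsWithin_le_nhds
  exact le_of_tendsto hlim (by filter_upwards [Ioc_mem_nhdsGT one_pos] using key)

section Product

variable {E H : Type*} [NormedAddCommGroup E] [NormedAddCommGroup H]

theorem pairL2_sub (w₁ w₂ : E) (l₁ l₂ : H) :
    pairL2 w₁ l₁ - pairL2 w₂ l₂ = pairL2 (w₁ - w₂) (l₁ - l₂) := rfl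

theorem norm_pairL2_le (w : E) (l : H) : ‖pairL2 w l‖ ≤ ‖w‖ + ‖l‖ := by
  have h : ‖pairL2 w l‖ ^ 2 = ‖w‖ ^ 2 + ‖l‖ ^ 2 := WithLp.prod_norm_sq_eq_of_L2 _
  nlinarith [norm_nonneg w, norm_nonneg l, norm_nonneg (pairL2 w l)]

variable [InnerProductSpace ℝ E] [CompleteSpace E] [InnerProductSpace ℝ H] [CompleteSpace H]
  {F : WithLp 2 (E × H) → ℝ}

theorem hasGradientAt_comp_pairL2_left {w : E} {l : H} (hF : DifferentiableAt ℝ F (pairL2 w l)) :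
    HasGradientAt (fun v => F (pairL2 v l)) (gradient F (pairL2 w l)).fst w := by
  have hpair : HasFDerivAt (fun v : E => pairL2 v l)
      ((WithLp.prodContinuousLinearEquiv 2 ℝ E H).symm.toContinuousLinearMap.comp
        ((ContinuousLinearMap.id ℝ E).prod 0)) w :=
    (WithLp.prodContinuousLinearEquiv 2 ℝ E H).symm.hasFDerivAt.comp w
      ((hasFDerivAt_id w).prodMk (hasFDerivAt_const l w))
  have hderiv : toDual ℝ E (gradient F (pairL2 w l)).fst =
      (toDual ℝ _ (gradient F (pairL2 w l))).comp
        ((WithLp.prodContinuousLinearEquiv 2 ℝ E H).symm.toContinuousLinearMap.comp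
          ((ContinuousLinearMap.id ℝ E).prod 0)) := by
    ext v
    rw [ContinuousLinearMap.comp_apply, toDual_apply_apply, toDual_apply_apply,
      WithLp.prod_inner_apply]
    simp
  rw [hasGradientAt_iff_hasFDerivAt, hderiv]
  exact hF.hasGradientAt.hasFDerivAt.comp w hpair

theorem hasGradientAt_comp_pairL2_right {w : E} {l : H} (hF : DifferentiableAt ℝ F (pairL2 w l)) :
    HasGradientAt (fun m => F (pairL2 w m)) (gradient F (pairL2 w l)).snd l := by
  have hpair : HasFDerivAt (fun m : H => pairL2 w m)
      ((WithLp.prodContinuousLinearEquiv 2 ℝ E H).symm.toContinuousLinearMap.comp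
        ((0 : H →L[ℝ] E).prod (ContinuousLinearMap.id ℝ H))) l :=
    (WithLp.prodContinuousLinearEquiv 2 ℝ E H).symm.hasFDerivAt.comp l
      ((hasFDerivAt_const w l).prodMk (hasFDerivAt_id l))
  have hderiv : toDual ℝ H (gradient F (pairL2 w l)).snd =
      (toDual ℝ _ (gradient F (pairL2 w l))).comp
        ((WithLp.prodContinuousLinearEquiv 2 ℝ E H).symm.toContinuousLinearMap.comp
          ((0 : H →L[ℝ] E).prod (ContinuousLinearMap.id ℝ H))) := by
    ext v
    rw [ContinuousLinearMap.comp_apply, toDual_apply_apply, toDual_apply_apply,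
      WithLp.prod_inner_apply]
    simp
  rw [hasGradientAt_iff_hasFDerivAt, hderiv]
  exact hF.hasGradientAt.hasFDerivAt.comp l hpair

end Product

section Danskin

variable {E H : Type*} [NormedAddCommGroup E] [InnerProductSpace ℝ E] [CompleteSpace E]
  [NormedAddCommGroup H] [InnerProductSpace ℝ H] [CompleteSpace H]
  {F : WithLp 2 (E × H) → ℝ} {L : ℝ}

theorem norm_gradient_comp_pairL2_left_sub_le (hF : Differentiable ℝ F) (hL : 0 ≤ L)
    (hFlip : ∀ p q, ‖gradient F p - gradient F q‖ ≤ L * ‖p - q‖) (w₁ w₂ : E) (l₁ l₂ : H) :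
    ‖gradient (fun v => F (pairL2 v l₁)) w₁ - gradient (fun v => F (pairL2 v l₂)) w₂‖
      ≤ L * (‖w₁ - w₂‖ + ‖l₁ - l₂‖) := by
  rw [(hasGradientAt_comp_pairL2_left (hF _)).gradient,
    (hasGradientAt_comp_pairL2_left (hF _)).gradient]
  calc _ ≤ ‖gradient F (pairL2 w₁ l₁) - gradient F (pairL2 w₂ l₂)‖ :=
        WithLp.norm_fst_le _ _
    _ ≤ L * ‖pairL2 w₁ l₁ - pairL2 w₂ l₂‖ := hFlip _ _
    _ ≤ L * (‖w₁ - w₂‖ + ‖l₁ - l₂‖) := by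
      rw [pairL2_sub]
      exact mul_le_mul_of_nonneg_left (norm_pairL2_le _ _) hL

theorem norm_gradient_comp_pairL2_right_sub_le (hF : Differentiable ℝ F) (hL : 0 ≤ L)
    (hFlip : ∀ p q, ‖gradient F p - gradient F q‖ ≤ L * ‖p - q‖) (w₁ w₂ : E) (l₁ l₂ : H) :
    ‖gradient (fun m => F (pairL2 w₁ m)) l₁ - gradient (fun m => F (pairL2 w₂ m)) l₂‖
      ≤ L * (‖w₁ - w₂‖ + ‖l₁ - l₂‖) := by
  rw [(hasGradientAt_comp_pairL2_right (hF _)).gradient,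
    (hasGradientAt_comp_pairL2_right (hF _)).gradient]
  calc _ ≤ ‖gradient F (pairL2 w₁ l₁) - gradient F (pairL2 w₂ l₂)‖ :=
        WithLp.norm_snd_le _ _
    _ ≤ L * ‖pairL2 w₁ l₁ - pairL2 w₂ l₂‖ := hFlip _ _
    _ ≤ L * (‖w₁ - w₂‖ + ‖l₁ - l₂‖) := by
      rw [pairL2_sub]
      exact mul_le_mul_of_nonneg_left (norm_pairL2_le _ _) hL

theorem abs_sub_sub_sub_comp_pairL2_le (hF : Differentiable ℝ F) (hL : 0 ≤ L)
    (hFlip : ∀ p q, ‖gradient F p - gradient F q‖ ≤ L * ‖p - q‖) (w₁ w₂ : E) (l₁ l₂ : H) :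
    |(F (pairL2 w₁ l₁) - F (pairL2 w₂ l₁)) - (F (pairL2 w₁ l₂) - F (pairL2 w₂ l₂))|
      ≤ L * ‖w₁ - w₂‖ * ‖l₁ - l₂‖ := by
  have hgrad : ∀ m ∈ (univ : Set H), HasGradientAt (fun m => F (pairL2 w₁ m) - F (pairL2 w₂ m))
      (gradient (fun m => F (pairL2 w₁ m)) m - gradient (fun m => F (pairL2 w₂ m)) m) m :=
    fun m _ => ((hasGradientAt_comp_pairL2_right (hF _)).differentiableAt.hasGradientAt).sub
      (hasGradientAt_comp_pairL2_right (hF _)).differentiableAt.hasGradientAt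
  have hbound : ∀ m ∈ (univ : Set H),
      ‖gradient (fun m => F (pairL2 w₁ m)) m - gradient (fun m => F (pairL2 w₂ m)) m‖
        ≤ L * ‖w₁ - w₂‖ := fun m _ => by
    simpa using norm_gradient_comp_pairL2_right_sub_le hF hL hFlip w₁ w₂ m m
  exact convex_univ.abs_sub_le_of_norm_gradient_le hgrad hbound (mem_univ l₂) (mem_univ l₁)

theorem norm_sub_le_of_isMaxOn (hF : Differentiable ℝ F) (hL : 0 ≤ L)
    (hFlip : ∀ p q, ‖gradient F p - gradient F q‖ ≤ L * ‖p - q‖) {Λ : Set H} {μ : ℝ}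
    (hconc : ∀ w, StrongConcaveOn Λ μ fun l => F (pairL2 w l)) {w₁ w₂ : E} {l₁ l₂ : H}
    (hl₁ : l₁ ∈ Λ) (hl₂ : l₂ ∈ Λ) (hmax₁ : IsMaxOn (fun l => F (pairL2 w₁ l)) Λ l₁)
    (hmax₂ : IsMaxOn (fun l => F (pairL2 w₂ l)) Λ l₂) :
    μ * ‖l₁ - l₂‖ ≤ L * ‖w₁ - w₂‖ := by
  have h₁ := (hconc w₁).add_sq_le_of_isMaxOn hl₁ hmax₁ hl₂
  have h₂ := (hconc w₂).add_sq_le_of_isMaxOn hl₂ hmax₂ hl₁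
  have hmixed := (abs_sub_sub_sub_comp_pairL2_le hF hL hFlip w₁ w₂ l₁ l₂).trans' (le_abs_self _)
  rw [norm_sub_rev l₂] at h₁
  rcases (norm_nonneg (l₁ - l₂)).eq_or_lt with hzero | hpos
  · rw [← hzero, mul_zero]
    exact mul_nonneg hL (norm_nonneg _)
  · refine le_of_mul_le_mul_right ?_ hpos
    linarith

theorem abs_sub_sub_inner_le_of_isMaxOn (hF : Differentiable ℝ F) (hL : 0 ≤ L)
    (hFlip : ∀ p q, ‖gradient F p - gradient F q‖ ≤ L * ‖p - q‖) {Λ : Set H} {lam : E → H}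
    {K : ℝ} (hK : 0 ≤ K) (hlam_mem : ∀ w, lam w ∈ Λ)
    (hmax : ∀ w, IsMaxOn (fun l => F (pairL2 w l)) Λ (lam w))
    (hlam_lip : ∀ w₁ w₂, ‖lam w₁ - lam w₂‖ ≤ K * ‖w₁ - w₂‖) (w w' : E) :
    |F (pairL2 w' (lam w')) - F (pairL2 w (lam w))
        - ⟪gradient (fun v => F (pairL2 v (lam w))) w, w' - w⟫_ℝ|
      ≤ (L + K * L) * ‖w' - w‖ ^ 2 := by
  have htaylor : ∀ l : H, |F (pairL2 w' l) - F (pairL2 w l)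
      - ⟪gradient (fun v => F (pairL2 v l)) w, w' - w⟫_ℝ| ≤ L * ‖w' - w‖ ^ 2 := fun l =>
    abs_sub_sub_inner_gradient_le hL
      (fun v => (hasGradientAt_comp_pairL2_left (hF (pairL2 v l))).differentiableAt)
      (fun v₁ v₂ => by simpa using norm_gradient_comp_pairL2_left_sub_le hF hL hFlip v₁ v₂ l l)
      w w'
  have hlower := (abs_le.1 (htaylor (lam w))).1
  have hupper := (abs_le.1 (htaylor (lam w'))).2
  have hmax_w' : F (pairL2 w' (lam w)) ≤ F (pairL2 w' (lam w')) := hmax w' (hlam_mem w)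
  have hmax_w : F (pairL2 w (lam w')) ≤ F (pairL2 w (lam w)) := hmax w (hlam_mem w')
  have hshift : ⟪gradient (fun v => F (pairL2 v (lam w'))) w
      - gradient (fun v => F (pairL2 v (lam w))) w, w' - w⟫_ℝ ≤ K * L * ‖w' - w‖ ^ 2 :=
    calc _ ≤ ‖gradient (fun v => F (pairL2 v (lam w'))) w
          - gradient (fun v => F (pairL2 v (lam w))) w‖ * ‖w' - w‖ := real_inner_le_norm _ _
      _ ≤ L * (K * ‖w' - w‖) * ‖w' - w‖ := by
        gcongr
        simpa using (norm_gradient_comp_pairL2_left_sub_le hF hL hFlip w w (lam w') (lam w)).trans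
          (mul_le_mul_of_nonneg_left (by simpa using hlam_lip w' w) hL)
      _ = K * L * ‖w' - w‖ ^ 2 := by ring
  rw [inner_sub_left] at hshift
  rw [abs_le]
  constructor <;> linarith [mul_nonneg (mul_nonneg hK hL) (sq_nonneg ‖w' - w‖)]

end Danskin

theorem phi_smooth_danskin_general
    {E H : Type*} [NormedAddCommGroup E] [InnerProductSpace ℝ E] [CompleteSpace E]
    [NormedAddCommGroup H] [InnerProductSpace ℝ H] [CompleteSpace H]
    (Λ : Set H) (hΛconv : Convex ℝ Λ)
    (F : WithLp 2 (E × H) → ℝ) (L μ : ℝ) (hL : 0 < L) (hμ : 0 < μ)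
    (κ : ℝ) (hκ : κ = L / μ)
    (hFdiff : Differentiable ℝ F)
    (hFlip : ∀ p q : WithLp 2 (E × H), ‖gradient F p - gradient F q‖ ≤ L * ‖p - q‖)
    (hconc : ∀ w : E, ∀ x ∈ Λ, ∀ y ∈ Λ, ∀ a : ℝ, 0 ≤ a → a ≤ 1 →
      a * F (pairL2 w x) + (1 - a) * F (pairL2 w y)
          + μ / 2 * a * (1 - a) * ‖x - y‖ ^ 2
        ≤ F (pairL2 w (a • x + (1 - a) • y)))
    (lam : E → H) (hlam_mem : ∀ w : E, lam w ∈ Λ)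
    (hlam_max : ∀ w : E, ∀ l ∈ Λ, F (pairL2 w l) ≤ F (pairL2 w (lam w)))
    (Φ : E → ℝ) (hΦ : ∀ w : E, Φ w = F (pairL2 w (lam w))) :
    (∀ w : E, HasGradientAt Φ (gradient (fun w' => F (pairL2 w' (lam w))) w) w) ∧
    (∀ w₁ w₂ : E,
      ‖gradient (fun w' => F (pairL2 w' (lam w₁))) w₁
          - gradient (fun w' => F (pairL2 w' (lam w₂))) w₂‖
        ≤ (L + κ * L) * ‖w₁ - w₂‖) := by
  have hκ_nonneg : 0 ≤ κ := hκ ▸ by positivity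
  have hstrong : ∀ w, StrongConcaveOn Λ μ fun l => F (pairL2 w l) :=
    fun w => ⟨hΛconv, fun x hx y hy a b ha hb hab => by
      obtain rfl : b = 1 - a := by linarith
      simp only [smul_eq_mul]
      linarith [hconc w x hx y hy a ha (by linarith)]⟩
  have hlam_lip : ∀ w₁ w₂, ‖lam w₁ - lam w₂‖ ≤ κ * ‖w₁ - w₂‖ := fun w₁ w₂ => by
    rw [hκ, div_mul_eq_mul_div, le_div_iff₀' hμ]
    exact norm_sub_le_of_isMaxOn hFdiff hL.le hFlip hstrong (hlam_mem w₁) (hlam_mem w₂)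
      (hlam_max w₁) (hlam_max w₂)
  refine ⟨fun w => hasGradientAt_of_abs_sub_sub_inner_le_sq (C := L + κ * L) fun w' => ?_,
    fun w₁ w₂ => ?_⟩
  · rw [hΦ, hΦ]
    exact abs_sub_sub_inner_le_of_isMaxOn hFdiff hL.le hFlip hκ_nonneg hlam_mem hlam_max
      hlam_lip w w'
  · calc _ ≤ L * (‖w₁ - w₂‖ + ‖lam w₁ - lam w₂‖) :=
          norm_gradient_comp_pairL2_left_sub_le hFdiff hL.le hFlip w₁ w₂ _ _
      _ ≤ L * (‖w₁ - w₂‖ + κ * ‖w₁ - w₂‖) := by gcongr; exact hlam_lip w₁ w₂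
      _ = (L + κ * L) * ‖w₁ - w₂‖ := by ring

/-- **Danskin-type smoothness of `Φ` (Lin et al.).**
Let `Λ ⊆ H` be nonempty, compact and convex, and let `F : E × H → ℝ` (with the
`ℓ²` product norm on `E × H`) be differentiable with `L`-Lipschitz gradient and
`μ`-strongly concave in its second argument on `Λ`.  With `λ*(w)` the (unique)
maximizer of `F(w, ·)` over `Λ`, `Φ(w) = max_{λ ∈ Λ} F(w, λ) = F(w, λ*(w))` and
`κ = L/μ`, the function `Φ` is differentiable with `∇Φ(w) = ∇_w F(w, λ*(w))`,
and `∇Φ` is `(L + κL)`-Lipschitz. -/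
theorem phi_smooth_danskin
    {E H : Type*} [NormedAddCommGroup E] [InnerProductSpace ℝ E] [CompleteSpace E]
    [NormedAddCommGroup H] [InnerProductSpace ℝ H] [CompleteSpace H]
    (Λ : Set H) (hΛne : Λ.Nonempty) (hΛcomp : IsCompact Λ) (hΛconv : Convex ℝ Λ)
    (F : WithLp 2 (E × H) → ℝ) (L μ : ℝ) (hL : 0 < L) (hμ : 0 < μ)
    (κ : ℝ) (hκ : κ = L / μ)
    (hFdiff : Differentiable ℝ F)
    (hFlip : ∀ p q : WithLp 2 (E × H), ‖gradient F p - gradient F q‖ ≤ L * ‖p - q‖)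
    (hconc : ∀ w : E, ∀ x ∈ Λ, ∀ y ∈ Λ, ∀ a : ℝ, 0 ≤ a → a ≤ 1 →
      a * F (pairL2 w x) + (1 - a) * F (pairL2 w y)
          + μ / 2 * a * (1 - a) * ‖x - y‖ ^ 2
        ≤ F (pairL2 w (a • x + (1 - a) • y)))
    (lam : E → H) (hlam_mem : ∀ w : E, lam w ∈ Λ)
    (hlam_max : ∀ w : E, ∀ l ∈ Λ, F (pairL2 w l) ≤ F (pairL2 w (lam w)))
    (hlam_uniq : ∀ w : E, ∀ l ∈ Λ,
      (∀ l' ∈ Λ, F (pairL2 w l') ≤ F (pairL2 w l)) → l = lam w)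
    (Φ : E → ℝ) (hΦ : ∀ w : E, Φ w = F (pairL2 w (lam w))) :
    (∀ w : E, HasGradientAt Φ (gradient (fun w' => F (pairL2 w' (lam w))) w) w) ∧
    (∀ w₁ w₂ : E,
      ‖gradient (fun w' => F (pairL2 w' (lam w₁))) w₁
          - gradient (fun w' => F (pairL2 w' (lam w₂))) w₂‖
        ≤ (L + κ * L) * ‖w₁ - w₂‖) :=
  phi_smooth_danskin_general Λ hΛconv F L μ hL hμ κ hκ hFdiff hFlip hconc lam hlam_mem hlam_max Φ hΦ
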